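/- Let z̄ be an extended process and let (z_j)_{j∈ℕ} be a sequence of extended processes with d̃(z_j, z̄) → 0 as j → ∞. Then the endpoints converge: (y⁰_j(S_j), y_j(S_j), β_j(S_j)) → (ȳ⁰(S̄), ȳ(S̄), β̄(S̄)) in ℝ × ℝⁿ × ℝ. In particular, for every continuous Ψ : ℝ × ℝⁿ → ℝ one has Ψ(y⁰_j(S_j), y_j(S_j)) → Ψ(ȳ⁰(S̄), ȳ(S̄)). -/

import Mathlib

open MeasureTheory Set Filter
open scoped ENNReal InnerProductSpace BigOperators

noncomputable section

/-- `Vec k` is the Euclidean space `ℝ^k`. -/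
abbrev Vec (k : ℕ) : Type := EuclideanSpace ℝ (Fin k)

/-- Raw data of an extended process `(S, w⁰, w, y⁰, y, β)`. -/
structure RawProc (n m : ℕ) where
  S : ℝ
  w0 : ℝ → ℝ
  w : ℝ → Vec m
  y0 : ℝ → ℝ
  y : ℝ → Vec n
  β : ℝ → ℝ

/-- Lebesgue measure restricted to `[0,S]`. -/
def μres (S : ℝ) : Measure ℝ := volume.restrict (Icc 0 S)

/-- `Γ` is a cone (closed under multiplication by nonnegative scalars). -/
def IsConeIn {F : Type*} [SMul ℝ F] (Γ : Set F) : Prop :=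
  ∀ c : ℝ, 0 ≤ c → ∀ v ∈ Γ, c • v ∈ Γ

/-- The vector fields `f, g₁, …, g_m` are `C¹` and bounded together with their
first derivatives. -/
def GoodDyn {n m : ℕ} (f : Vec n → Vec n) (g : Fin m → Vec n → Vec n) : Prop :=
  ContDiff ℝ 1 f ∧ (∀ i, ContDiff ℝ 1 (g i)) ∧
  ∃ M : ℝ, (∀ x, ‖f x‖ ≤ M) ∧ (∀ i x, ‖g i x‖ ≤ M) ∧
    (∀ x, ‖fderiv ℝ f x‖ ≤ M) ∧ (∀ i x, ‖fderiv ℝ (g i) x‖ ≤ M)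

variable {n m : ℕ}

/-- `z = (S, w⁰, w, y⁰, y, β)` is an extended process for the dynamics `f, g`,
control cone `C` and initial point `x0`. -/
def IsExtProcess (f : Vec n → Vec n) (g : Fin m → Vec n → Vec n)
    (C : Set (Vec m)) (x0 : Vec n) (z : RawProc n m) : Prop :=
  0 < z.S ∧ Measurable z.w0 ∧ Measurable z.w ∧
  (∃ M : ℝ, ∀ᵐ s ∂μres z.S, |z.w0 s| + ‖z.w s‖ ≤ M) ∧
  (∀ᵐ s ∂μres z.S, 0 ≤ z.w0 s ∧ z.w s ∈ C) ∧
  (∃ c : ℝ, 0 < c ∧ ∀ᵐ s ∂μres z.S, c ≤ z.w0 s + ‖z.w s‖) ∧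
  (∀ s, s ∉ Ico (0:ℝ) z.S → z.w0 s = 0 ∧ z.w s = 0) ∧
  (∀ s ∈ Icc (0:ℝ) z.S, z.y0 s = ∫ t in (0:ℝ)..s, z.w0 t) ∧
  (∀ s ∈ Icc (0:ℝ) z.S, z.y s = x0 + ∫ t in (0:ℝ)..s,
      (z.w0 t • f (z.y t) + ∑ i, z.w t i • g i (z.y t))) ∧
  (∀ s ∈ Icc (0:ℝ) z.S, z.β s = ∫ t in (0:ℝ)..s, ‖z.w t‖) ∧
  (∀ s, z.S ≤ s → z.y0 s = z.y0 z.S ∧ z.y s = z.y z.S ∧ z.β s = z.β z.S)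

/-- Embedded strict-sense process: `w⁰ > 0` a.e. on `[0,S]`. -/
def IsEmbedded (z : RawProc n m) : Prop := ∀ᵐ s ∂μres z.S, 0 < z.w0 s

/-- Canonical process: `w⁰ + |w| = 1` a.e. on `[0,S]`. -/
def IsCanonical (z : RawProc n m) : Prop := ∀ᵐ s ∂μres z.S, z.w0 s + ‖z.w s‖ = 1

/-- Feasibility: endpoint in the target and energy bounded by `K`. -/
def Feasible (Tgt : Set (ℝ × Vec n)) (K : ℝ≥0∞) (z : RawProc n m) : Prop :=
  (z.y0 z.S, z.y z.S) ∈ Tgt ∧ ENNReal.ofReal (z.β z.S) ≤ K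

/-- The control distance `d̃`. -/
def dtil (z1 z2 : RawProc n m) : ℝ :=
  |z1.S - z2.S| +
    ∫ s in (0:ℝ)..(max z1.S z2.S), (|z1.w0 s - z2.w0 s| + ‖z1.w s - z2.w s‖)

/-- The control distance `d` (Euclidean norm of the control pair, integrated on
`[0, S₁ ∧ S₂]`). -/
def dcan (z1 z2 : RawProc n m) : ℝ :=
  |z1.S - z2.S| +
    ∫ s in (0:ℝ)..(min z1.S z2.S),
      Real.sqrt ((z1.w0 s - z2.w0 s) ^ 2 + ‖z1.w s - z2.w s‖ ^ 2)

/-- `σ` realizes `z` as a time-reparametrization of `zt`. -/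
def TimeChangeOf (z zt : RawProc n m) (σ : ℝ → ℝ) : Prop :=
  StrictMonoOn σ (Icc 0 z.S) ∧ σ '' Icc 0 z.S = Icc 0 zt.S ∧
  (∃ L1 > (0:ℝ), ∃ L2 : ℝ, ∀ s ∈ Icc (0:ℝ) z.S, ∀ t ∈ Icc (0:ℝ) z.S,
      L1 * |s - t| ≤ |σ s - σ t| ∧ |σ s - σ t| ≤ L2 * |s - t|) ∧
  (∀ᵐ s ∂μres z.S, DifferentiableAt ℝ σ s ∧
      z.w0 s = zt.w0 (σ s) * deriv σ s ∧ z.w s = deriv σ s • zt.w (σ s)) ∧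
  (∀ s ∈ Icc (0:ℝ) z.S, z.y0 s = zt.y0 (σ s) ∧ z.y s = zt.y (σ s) ∧ z.β s = zt.β (σ s))

/-- Equivalence of extended processes. -/
def EquivProc (z zt : RawProc n m) : Prop := ∃ σ : ℝ → ℝ, TimeChangeOf z zt σ

/-- Local infimum gap at `zb` with respect to `(X^𝒮_{W̃₊}, d̃)`. -/
def GapTil (f : Vec n → Vec n) (g : Fin m → Vec n → Vec n) (C : Set (Vec m)) (x0 : Vec n)
    (Tgt : Set (ℝ × Vec n)) (K : ℝ≥0∞) (Ψ : ℝ × Vec n → ℝ) (zb : RawProc n m) : Prop :=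
  ∃ r > (0:ℝ), ∃ ε > (0:ℝ), ∀ z : RawProc n m,
    IsExtProcess f g C x0 z → IsEmbedded z → Feasible Tgt K z → dtil z zb < r →
      Ψ (zb.y0 zb.S, zb.y zb.S) + ε ≤ Ψ (z.y0 z.S, z.y z.S)

/-- Local infimum gap at `zb` with respect to `(X^𝒮_{W₊}, d)` (canonical
embedded strict-sense processes only). -/
def GapCan (f : Vec n → Vec n) (g : Fin m → Vec n → Vec n) (C : Set (Vec m)) (x0 : Vec n)
    (Tgt : Set (ℝ × Vec n)) (K : ℝ≥0∞) (Ψ : ℝ × Vec n → ℝ) (zb : RawProc n m) : Prop :=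
  ∃ r > (0:ℝ), ∃ ε > (0:ℝ), ∀ z : RawProc n m,
    IsExtProcess f g C x0 z → IsEmbedded z → IsCanonical z → Feasible Tgt K z →
      dcan z zb < r → Ψ (zb.y0 zb.S, zb.y zb.S) + ε ≤ Ψ (z.y0 z.S, z.y z.S)

/-- Raw data of a strict-sense process `(T, u, x, 𝓋)`. -/
structure RawStrict (n m : ℕ) where
  T : ℝ
  u : ℝ → Vec m
  x : ℝ → Vec n
  v : ℝ → ℝ

/-- `(T, u, x, 𝓋)` is a strict-sense process. -/
def IsStrictProcess (f : Vec n → Vec n) (g : Fin m → Vec n → Vec n)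
    (C : Set (Vec m)) (x0 : Vec n) (P : RawStrict n m) : Prop :=
  0 < P.T ∧ Measurable P.u ∧ IntegrableOn P.u (Icc 0 P.T) ∧
  (∀ᵐ t ∂μres P.T, P.u t ∈ C) ∧
  (∀ t ∈ Icc (0:ℝ) P.T,
      P.x t = x0 + ∫ τ in (0:ℝ)..t, (f (P.x τ) + ∑ i, P.u τ i • g i (P.x τ))) ∧
  (∀ t ∈ Icc (0:ℝ) P.T, P.v t = ∫ τ in (0:ℝ)..t, ‖P.u τ‖)

/-- Lie bracket `[h,k] = Dk·h − Dh·k` of two vector fields. -/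
def lieB {n : ℕ} (h k : Vec n → Vec n) : Vec n → Vec n :=
  fun x => fderiv ℝ k x (h x) - fderiv ℝ h x (k x)

/-- Iterated Lie brackets of the vector fields `g₁, …, g_{m₁}`. -/
inductive IterLie {n m : ℕ} (g : Fin m → Vec n → Vec n) (m1 : ℕ) : (Vec n → Vec n) → Prop
  | base (i : Fin m) (hi : (i : ℕ) < m1) : IterLie g m1 (g i)
  | brk {h k : Vec n → Vec n} : IterLie g m1 h → IterLie g m1 k → IterLie g m1 (lieB h k)

/-- The extended control set `Ĉ`. -/
def Chat {m : ℕ} (C : Set (Vec m)) : Set (ℝ × Vec m) :=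
  closure {c : ℝ × Vec m | 0 < c.1 ∧ c.2 ∈ C ∧ c.1 + ‖c.2‖ = 1}

/-- The unmaximized Hamiltonian. -/
def Hham {n m : ℕ} (f : Vec n → Vec n) (g : Fin m → Vec n → Vec n)
    (x p : Vec n) (p0 piv w0 : ℝ) (w : Vec m) : ℝ :=
  p0 * w0 + ⟪p, w0 • f x + ∑ i, w i • g i x⟫_ℝ + piv * ‖w‖

/-- A modulus. -/
def IsModulus (ρ : ℝ → ℝ) : Prop :=
  (∀ s t : ℝ, 0 ≤ s → s ≤ t → ρ s ≤ ρ t) ∧ (∀ s : ℝ, 0 ≤ s → 0 ≤ ρ s) ∧ ρ 0 = 0 ∧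
    Tendsto ρ (nhdsWithin 0 (Ioi 0)) (nhds 0)

/-- Quasi Differential Quotient of a set-valued map `G` at `(ξ, ybar)` in the
direction of `Γ`. -/
def IsQDQ {N : ℕ} {F : Type*} [NormedAddCommGroup F] [NormedSpace ℝ F]
    (G : Vec N → Set F) (ξ : Vec N) (ybar : F) (Γ : Set (Vec N))
    (Λ : Set (Vec N →L[ℝ] F)) : Prop :=
  IsCompact Λ ∧ ∃ ρ : ℝ → ℝ, IsModulus ρ ∧ ∃ δb > (0:ℝ), ∀ δ ∈ Icc (0:ℝ) δb,
    ∃ L : Vec N → (Vec N →L[ℝ] F), ∃ h : Vec N → F,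
      ContinuousOn (fun x => (L x, h x)) (Metric.ball ξ δ ∩ Γ) ∧
      ∀ x ∈ Metric.ball ξ δ ∩ Γ,
        ybar + L x (x - ξ) + h x ∈ G x ∧ ‖h x‖ ≤ δ * ρ δ ∧ ∃ L' ∈ Λ, ‖L x - L'‖ ≤ ρ δ

/-- QDQ approximating cone to `E` at `z`. -/
def IsQDQApproxCone {F : Type*} [NormedAddCommGroup F] [NormedSpace ℝ F]
    (E : Set F) (z : F) (Kc : Set F) : Prop :=
  z ∈ E ∧ Convex ℝ Kc ∧ IsConeIn Kc ∧
  ∃ N : ℕ, ∃ G : Vec N → Set F, ∃ Γ : Set (Vec N), ∃ ξ : Vec N, ∃ L : Vec N →L[ℝ] F,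
    Convex ℝ Γ ∧ IsConeIn Γ ∧ IsQDQ G ξ z Γ {L} ∧
    (∀ γ ∈ Γ, G (ξ + γ) ⊆ E) ∧ Kc = L '' Γ

/-- The vector fields are smooth and bounded together with all derivatives. -/
def SmoothDyn {n m : ℕ} (f : Vec n → Vec n) (g : Fin m → Vec n → Vec n) : Prop :=
  ContDiff ℝ (⊤ : ℕ∞) f ∧ (∀ i, ContDiff ℝ (⊤ : ℕ∞) (g i)) ∧
  (∀ k : ℕ, ∃ M : ℝ, ∀ x, ‖iteratedFDeriv ℝ k f x‖ ≤ M) ∧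
  (∀ i, ∀ k : ℕ, ∃ M : ℝ, ∀ x, ‖iteratedFDeriv ℝ k (g i) x‖ ≤ M)

/-- Mixing of the first `m1` coordinates of `v` with the remaining coordinates
of `v'`. -/
def mixVec {m : ℕ} (m1 : ℕ) (v v' : Vec m) : Vec m :=
  ∑ i : Fin m,
    if (i : ℕ) < m1 then EuclideanSpace.single i (v i) else EuclideanSpace.single i (v' i)

/-- `(p, p0, π, λ)` is a multiplier tuple making `zb` a higher-order
`Ψ`-extremal with respect to the QDQ approximating cone `Kc`. -/
def HOMultiplier {n m : ℕ} (f : Vec n → Vec n) (g : Fin m → Vec n → Vec n) (m1 : ℕ)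
    (C : Set (Vec m)) (K : ℝ≥0∞) (Ψ : ℝ × Vec n → ℝ) (Kc : Set (ℝ × Vec n))
    (zb : RawProc n m) (p : ℝ → Vec n) (p0 piv lam : ℝ) : Prop :=
  piv ≤ 0 ∧ 0 ≤ lam ∧
  -- (i) non-triviality
  (p0 ≠ 0 ∨ (∃ s ∈ Icc (0:ℝ) zb.S, p s ≠ 0) ∨ lam ≠ 0) ∧
  (0 < zb.y0 zb.S → ((∃ s ∈ Icc (0:ℝ) zb.S, p s ≠ 0) ∨ lam ≠ 0)) ∧
  -- (ii) non-transversality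
  (∃ q G : ℝ × Vec n,
    (∀ v ∈ Kc, q.1 * v.1 + ⟪q.2, v.2⟫_ℝ ≤ 0) ∧
    (∀ v : ℝ × Vec n, fderiv ℝ Ψ (zb.y0 zb.S, zb.y zb.S) v = G.1 * v.1 + ⟪G.2, v.2⟫_ℝ) ∧
    (p0, p zb.S) = -lam • G - q) ∧
  (ENNReal.ofReal (zb.β zb.S) < K → piv = 0) ∧
  -- (iii) adjoint equation (integral form)
  (∀ s ∈ Icc (0:ℝ) zb.S, p s = p 0 - ∫ t in (0:ℝ)..s,
      (zb.w0 t • (ContinuousLinearMap.adjoint (fderiv ℝ f (zb.y t))) (p t)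
        + ∑ i, zb.w t i • (ContinuousLinearMap.adjoint (fderiv ℝ (g i) (zb.y t))) (p t))) ∧
  -- (iv) first order maximization
  (∀ᵐ s ∂μres zb.S, ∀ c ∈ Chat C,
      Hham f g (zb.y s) (p s) p0 piv c.1 c.2
        ≤ Hham f g (zb.y s) (p s) p0 piv (zb.w0 s) (zb.w s)) ∧
  -- (v) vanishing of the (maximized) Hamiltonian
  (∀ s ∈ Icc (0:ℝ) zb.S,
      IsLUB ((fun c : ℝ × Vec m => Hham f g (zb.y s) (p s) p0 piv c.1 c.2) '' Chat C) 0) ∧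
  (ENNReal.ofReal (zb.β zb.S) < K →
      ∀ s ∈ Icc (0:ℝ) zb.S, ∀ i : Fin m, (i : ℕ) < m1 → ⟪p s, g i (zb.y s)⟫_ℝ = 0) ∧
  -- (vi) higher-order conditions
  (ENNReal.ofReal (zb.β zb.S) < K →
      ∀ B : Vec n → Vec n, IterLie g m1 B →
        (∀ s ∈ Icc (0:ℝ) zb.S, ⟪p s, B (zb.y s)⟫_ℝ = 0) ∧
        (∀ᵐ s ∂μres zb.S,
            ⟪p s, zb.w0 s • lieB f B (zb.y s)
              + ∑ j : Fin m,
                  (if m1 ≤ (j : ℕ) then zb.w s j • lieB (g j) B (zb.y s) else 0)⟫_ℝ = 0))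

end
namespace Stmt14

variable {n m : ℕ}

/-- The driving vector field along a process. -/
noncomputable def G {n m : ℕ} (f : Vec n → Vec n) (g : Fin m → Vec n → Vec n) (z : RawProc n m) : ℝ → Vec n :=
  fun t => z.w0 t • f (z.y t) + ∑ i, z.w t i • g i (z.y t)

lemma abs_apply_le (v : Vec m) (i : Fin m) : |v i| ≤ ‖v‖ := by
  rw [EuclideanSpace.norm_eq, ← Real.sqrt_sq_eq_abs]
  apply Real.sqrt_le_sqrt
  have := Finset.single_le_sum (f := fun j => ‖v j‖ ^ 2) (fun j _ => sq_nonneg _)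
    (Finset.mem_univ i)
  simpa [Real.norm_eq_abs, sq_abs] using this

lemma sum_abs_le (v : Vec m) : ∑ i, |v i| ≤ (m : ℝ) * ‖v‖ := by
  calc ∑ i, |v i| ≤ ∑ _i : Fin m, ‖v‖ := Finset.sum_le_sum fun i _ => abs_apply_le v i
  _ = (m : ℝ) * ‖v‖ := by simp [Finset.sum_const, nsmul_eq_mul]

lemma lip {f : Vec n → Vec n} {M : ℝ} (hf : ContDiff ℝ 1 f) (hM : ∀ x, ‖fderiv ℝ f x‖ ≤ M)
    (a b : Vec n) : ‖f a - f b‖ ≤ M * ‖a - b‖ :=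
  Convex.norm_image_sub_le_of_norm_fderiv_le
    (fun x _ => (hf.differentiable one_ne_zero).differentiableAt) (fun x _ => hM x)
    convex_univ (mem_univ b) (mem_univ a)

lemma G_bound {f : Vec n → Vec n} {g : Fin m → Vec n → Vec n} {M : ℝ}
    (hfM : ∀ x, ‖f x‖ ≤ M) (hgM : ∀ i x, ‖g i x‖ ≤ M) (z : RawProc n m) (t : ℝ) :
    ‖G f g z t‖ ≤ (M * (1 + m)) * (|z.w0 t| + ‖z.w t‖) := by
  have hM0 : 0 ≤ M := le_trans (norm_nonneg _) (hfM (z.y t))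
  have h1 : ‖G f g z t‖ ≤ |z.w0 t| * M + ∑ i, |z.w t i| * M := by
    refine le_trans (norm_add_le _ _) (add_le_add ?_ ?_)
    · rw [norm_smul, Real.norm_eq_abs]
      exact mul_le_mul_of_nonneg_left (hfM _) (abs_nonneg _)
    · refine le_trans (norm_sum_le _ _) (Finset.sum_le_sum fun i _ => ?_)
      rw [norm_smul, Real.norm_eq_abs]
      exact mul_le_mul_of_nonneg_left (hgM _ _) (abs_nonneg _)
  have h2 : ∑ i, |z.w t i| * M ≤ ((m : ℝ) * ‖z.w t‖) * M := by
    rw [← Finset.sum_mul]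
    exact mul_le_mul_of_nonneg_right (sum_abs_le _) hM0
  have h3 : 0 ≤ ‖z.w t‖ := norm_nonneg _
  have h4 : 0 ≤ |z.w0 t| := abs_nonneg _
  nlinarith [mul_nonneg hM0 h3, mul_nonneg hM0 h4]

lemma Gdiff_bound {f : Vec n → Vec n} {g : Fin m → Vec n → Vec n} {M Mb : ℝ}
    (hf : ContDiff ℝ 1 f) (hg : ∀ i, ContDiff ℝ 1 (g i))
    (hfM : ∀ x, ‖f x‖ ≤ M) (hgM : ∀ i x, ‖g i x‖ ≤ M)
    (hfD : ∀ x, ‖fderiv ℝ f x‖ ≤ M) (hgD : ∀ i x, ‖fderiv ℝ (g i) x‖ ≤ M)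
    (z1 z2 : RawProc n m) (t : ℝ) (hb : |z2.w0 t| + ‖z2.w t‖ ≤ Mb) :
    ‖G f g z1 t - G f g z2 t‖ ≤
      (M * (1 + m)) * ((|z1.w0 t - z2.w0 t| + ‖z1.w t - z2.w t‖)
        + Mb * ‖z1.y t - z2.y t‖) := by
  have hM0 : 0 ≤ M := le_trans (norm_nonneg _) (hfM (z1.y t))
  set φ := ‖z1.y t - z2.y t‖ with hφ
  have hφ0 : 0 ≤ φ := norm_nonneg _
  have hsum : ∑ i, ((z1.w t i - z2.w t i) • g i (z1.y t)
        + z2.w t i • (g i (z1.y t) - g i (z2.y t)))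
      = ∑ i, (z1.w t i • g i (z1.y t) - z2.w t i • g i (z2.y t)) := by
    refine Finset.sum_congr rfl fun i _ => ?_
    simp only [smul_sub, sub_smul]
    abel
  have key : G f g z1 t - G f g z2 t =
      ((z1.w0 t - z2.w0 t) • f (z1.y t) + z2.w0 t • (f (z1.y t) - f (z2.y t)))
      + ∑ i, ((z1.w t i - z2.w t i) • g i (z1.y t)
          + z2.w t i • (g i (z1.y t) - g i (z2.y t))) := by
    rw [hsum, Finset.sum_sub_distrib]
    simp only [G, smul_sub, sub_smul]
    abel
  rw [key]
  have hterm : ∀ i : Fin m, ‖(z1.w t i - z2.w t i) • g i (z1.y t)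
      + z2.w t i • (g i (z1.y t) - g i (z2.y t))‖
      ≤ |z1.w t i - z2.w t i| * M + |z2.w t i| * (M * φ) := by
    intro i
    refine le_trans (norm_add_le _ _) (add_le_add ?_ ?_)
    · rw [norm_smul, Real.norm_eq_abs]
      exact mul_le_mul_of_nonneg_left (hgM _ _) (abs_nonneg _)
    · rw [norm_smul, Real.norm_eq_abs]
      exact mul_le_mul_of_nonneg_left (lip (hg i) (hgD i) _ _) (abs_nonneg _)
  have h1 : ‖((z1.w0 t - z2.w0 t) • f (z1.y t) + z2.w0 t • (f (z1.y t) - f (z2.y t)))‖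
      ≤ |z1.w0 t - z2.w0 t| * M + |z2.w0 t| * (M * φ) := by
    refine le_trans (norm_add_le _ _) (add_le_add ?_ ?_)
    · rw [norm_smul, Real.norm_eq_abs]
      exact mul_le_mul_of_nonneg_left (hfM _) (abs_nonneg _)
    · rw [norm_smul, Real.norm_eq_abs]
      exact mul_le_mul_of_nonneg_left (lip hf hfD _ _) (abs_nonneg _)
  have h2 : ∑ i, (|z1.w t i - z2.w t i| * M + |z2.w t i| * (M * φ))
      ≤ ((m : ℝ) * ‖z1.w t - z2.w t‖) * M + ((m : ℝ) * ‖z2.w t‖) * (M * φ) := by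
    rw [Finset.sum_add_distrib, ← Finset.sum_mul, ← Finset.sum_mul]
    refine add_le_add (mul_le_mul_of_nonneg_right ?_ hM0)
      (mul_le_mul_of_nonneg_right ?_ (mul_nonneg hM0 hφ0))
    · calc ∑ i, |z1.w t i - z2.w t i| = ∑ i, |(z1.w t - z2.w t) i| :=
            Finset.sum_congr rfl fun i _ => rfl
      _ ≤ (m : ℝ) * ‖z1.w t - z2.w t‖ := sum_abs_le _
    · exact sum_abs_le _
  have h3 := norm_add_le ((z1.w0 t - z2.w0 t) • f (z1.y t) + z2.w0 t • (f (z1.y t) - f (z2.y t)))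
    (∑ i, ((z1.w t i - z2.w t i) • g i (z1.y t) + z2.w t i • (g i (z1.y t) - g i (z2.y t))))
  have h4 := norm_sum_le Finset.univ
    (fun i => (z1.w t i - z2.w t i) • g i (z1.y t) + z2.w t i • (g i (z1.y t) - g i (z2.y t)))
  have h5 := Finset.sum_le_sum fun i (_ : i ∈ Finset.univ) => hterm i
  have hb2 : |z2.w0 t| ≤ Mb := le_trans (le_add_of_nonneg_right (norm_nonneg _)) hb
  have hb3 : ‖z2.w t‖ ≤ Mb := le_trans (le_add_of_nonneg_left (abs_nonneg _)) hb
  have hd0 : 0 ≤ |z1.w0 t - z2.w0 t| := abs_nonneg _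
  have hd1 : 0 ≤ ‖z1.w t - z2.w t‖ := norm_nonneg _
  nlinarith [mul_nonneg hM0 hφ0, mul_nonneg (mul_nonneg hM0 hφ0) (norm_nonneg (z2.w t)),
    mul_nonneg hM0 hd0, mul_nonneg hM0 hd1, hφ0, Nat.cast_nonneg (α := ℝ) m,
    mul_le_mul_of_nonneg_left hb3 (mul_nonneg hM0 hφ0),
    mul_le_mul_of_nonneg_left hb2 (mul_nonneg hM0 hφ0)]

end Stmt14
namespace Stmt14

variable {n m : ℕ} {f : Vec n → Vec n} {g : Fin m → Vec n → Vec n}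
  {C : Set (Vec m)} {x0 : Vec n}

lemma int_of_bdd {E : Type*} [NormedAddCommGroup E] {h : ℝ → E} {s : Set ℝ} {Cb : ℝ}
    (hmeas : AEStronglyMeasurable h (volume.restrict s)) (hs : volume s < ⊤)
    (hbd : ∀ᵐ x ∂volume.restrict s, ‖h x‖ ≤ Cb) : IntegrableOn h s :=
  ⟨hmeas, HasFiniteIntegral.restrict_of_bounded _ hs hbd⟩

lemma ctrl_int {z : RawProc n m} (hz : IsExtProcess f g C x0 z) (T : ℝ) :
    IntegrableOn z.w0 (Icc 0 T) ∧ IntegrableOn z.w (Icc 0 T) := by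
  obtain ⟨hS, hw0m, hwm, ⟨Mz, hMz⟩, -⟩ := id hz
  have hzero := hz.2.2.2.2.2.2.1
  rw [μres] at hMz
  have h0S : IntegrableOn z.w0 (Icc 0 z.S) ∧ IntegrableOn z.w (Icc 0 z.S) := by
    constructor
    · refine int_of_bdd (Cb := Mz) (hw0m.aestronglyMeasurable.restrict) measure_Icc_lt_top ?_
      filter_upwards [hMz] with s hs
      calc ‖z.w0 s‖ = |z.w0 s| := rfl
        _ ≤ |z.w0 s| + ‖z.w s‖ := le_add_of_nonneg_right (norm_nonneg _)
        _ ≤ Mz := hs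
    · refine int_of_bdd (Cb := Mz) (hwm.aestronglyMeasurable.restrict) measure_Icc_lt_top ?_
      filter_upwards [hMz] with s hs
      exact le_trans (le_add_of_nonneg_left (abs_nonneg _)) hs
  rcases le_or_gt T z.S with hT | hT
  · exact ⟨h0S.1.mono_set (Icc_subset_Icc_right hT), h0S.2.mono_set (Icc_subset_Icc_right hT)⟩
  · have hsub : Icc (0:ℝ) T ⊆ Icc 0 z.S ∪ Icc z.S T := by
      intro s hs
      rcases le_or_gt s z.S with h | h
      · exact Or.inl ⟨hs.1, h⟩
      · exact Or.inr ⟨h.le, hs.2⟩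
    have hzero0 : ∀ s ∈ Icc z.S T, z.w0 s = 0 ∧ z.w s = 0 := fun s hs =>
      hzero s (fun hs' => absurd hs'.2 (not_lt.2 hs.1))
    have i1 : IntegrableOn z.w0 (Icc z.S T) := by
      refine (integrableOn_congr_fun (fun s hs => ((hzero0 s hs).1).symm)
        measurableSet_Icc).mp ?_
      exact integrableOn_zero
    have i2 : IntegrableOn z.w (Icc z.S T) := by
      refine (integrableOn_congr_fun (fun s hs => ((hzero0 s hs).2).symm)
        measurableSet_Icc).mp ?_
      exact integrableOn_zero
    exact ⟨(h0S.1.union i1).mono_set hsub, (h0S.2.union i2).mono_set hsub⟩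

lemma reg (hdyn : GoodDyn f g) {z : RawProc n m} (hz : IsExtProcess f g C x0 z) :
    IntegrableOn (G f g z) (Icc 0 z.S) ∧ ContinuousOn z.y (Ici 0) := by
  obtain ⟨hfC, hgC, M, hfM, hgM, hfD, hgD⟩ := hdyn
  obtain ⟨hS, hw0m, hwm, ⟨Mz, hMz⟩, -, -, hzero, -, hyeq0, -, hconst⟩ := id hz
  rw [μres] at hMz
  have hyeq : ∀ s ∈ Icc (0:ℝ) z.S, z.y s = x0 + ∫ t in (0:ℝ)..s, G f g z t := by
    intro s hs
    rw [hyeq0 s hs]; rfl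
  set Cb : ℝ := (M * (1 + m)) * Mz with hCb
  have hM0 : 0 ≤ M := le_trans (norm_nonneg _) (hfM 0)
  have hGb : ∀ᵐ t ∂volume.restrict (Icc (0:ℝ) z.S), ‖G f g z t‖ ≤ Cb := by
    filter_upwards [hMz] with t ht
    calc ‖G f g z t‖ ≤ (M * (1 + m)) * (|z.w0 t| + ‖z.w t‖) := G_bound hfM hgM z t
      _ ≤ Cb := by
        apply mul_le_mul_of_nonneg_left ht
        positivity
  -- integrability from a.e.-measurability on a subinterval
  have key : ∀ s ≤ z.S, AEStronglyMeasurable z.y (volume.restrict (Ioc 0 s)) →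
      IntegrableOn (G f g z) (Ioc 0 s) := by
    intro s hsS hym
    have hsub : Ioc (0:ℝ) s ⊆ Icc 0 z.S := fun t ht => ⟨ht.1.le, le_trans ht.2 hsS⟩
    refine int_of_bdd ?_ measure_Ioc_lt_top (ae_restrict_of_ae_restrict_of_subset hsub hGb)
    have hyae : AEMeasurable z.y (volume.restrict (Ioc 0 s)) := hym.aemeasurable
    have h1 : AEMeasurable (fun t => z.w0 t • f (z.y t)) (volume.restrict (Ioc 0 s)) :=
      (hw0m.aemeasurable.restrict).smul (hfC.continuous.measurable.comp_aemeasurable hyae)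
    have h2 : AEMeasurable (fun t => ∑ i, z.w t i • g i (z.y t))
        (volume.restrict (Ioc 0 s)) := by
      apply Finset.aemeasurable_fun_sum
      intro i _
      exact (show Measurable (fun t => z.w t i) from (EuclideanSpace.proj i).continuous.measurable.comp hwm).aemeasurable.restrict.smul
        ((hgC i).continuous.measurable.comp_aemeasurable hyae)
    exact (h1.add h2).aestronglyMeasurable
  set P : Set ℝ := {s | s ∈ Icc (0:ℝ) z.S ∧ IntegrableOn (G f g z) (Ioc 0 s)} with hP
  have h0P : (0:ℝ) ∈ P := ⟨⟨le_rfl, hS.le⟩, by simp⟩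
  have hbdd : BddAbove P := ⟨z.S, fun s hs => hs.1.2⟩
  set b : ℝ := sSup P with hbdef
  have hb0 : 0 ≤ b := le_csSup hbdd h0P
  have hbS : b ≤ z.S := csSup_le ⟨0, h0P⟩ fun s hs => hs.1.2
  have step1 : ∀ t, t < b → IntegrableOn (G f g z) (Ioc 0 t) := by
    intro t ht
    obtain ⟨s, hsP, hts⟩ := exists_lt_of_lt_csSup ⟨0, h0P⟩ ht
    exact hsP.2.mono_set (Ioc_subset_Ioc le_rfl hts.le)
  have step2 : IntegrableOn (G f g z) (Ioc 0 b) := by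
    have hIoo : IntegrableOn (G f g z) (Ioo 0 b) := by
      have hU : Ioo (0:ℝ) b = ⋃ k : ℕ, Ioc 0 (b - 1 / (k + 1)) := by
        ext x
        simp only [mem_Ioo, mem_iUnion, mem_Ioc]
        constructor
        · rintro ⟨hx0, hxb⟩
          obtain ⟨k, hk⟩ := exists_nat_one_div_lt (sub_pos.2 hxb)
          exact ⟨k, hx0, by linarith⟩
        · rintro ⟨k, hx0, hxk⟩
          have : (0:ℝ) < 1 / (k + 1) := by positivity
          exact ⟨hx0, by linarith⟩
      rw [hU]
      constructor
      · rw [aestronglyMeasurable_iff_aemeasurable, aemeasurable_iUnion_iff]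
        exact fun k => ((step1 _ (by
          have : (0:ℝ) < 1 / ((k:ℝ) + 1) := by positivity
          linarith)).aestronglyMeasurable).aemeasurable
      · rw [← hU]
        refine HasFiniteIntegral.restrict_of_bounded _ measure_Ioo_lt_top
          (ae_restrict_of_ae_restrict_of_subset ?_ hGb)
        exact fun t ht => ⟨ht.1.le, le_trans ht.2.le hbS⟩
    exact hIoo.congr_set_ae Ioo_ae_eq_Ioc.symm
  have hbP : b ∈ P := ⟨⟨hb0, hbS⟩, step2⟩
  have hbisS : b = z.S := by
    by_contra hne
    have hblt : b < z.S := lt_of_le_of_ne hbS hne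
    have hyconst : ∀ s ∈ Ioc b z.S, z.y s = x0 := by
      intro s hs
      have hnotint : ¬ IntegrableOn (G f g z) (Ioc 0 s) := by
        intro h
        have : s ∈ P := ⟨⟨le_trans hb0 hs.1.le, hs.2⟩, h⟩
        exact absurd (le_csSup hbdd this) (not_le.2 hs.1)
      have h := hyeq s ⟨le_trans hb0 hs.1.le, hs.2⟩
      rw [intervalIntegral.integral_of_le (le_trans hb0 hs.1.le)] at h
      rw [h, integral_undef hnotint, add_zero]
    have htail : IntegrableOn (G f g z) (Ioc b z.S) := by
      have heq : ∀ s ∈ Ioc b z.S, G f g z s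
          = z.w0 s • f x0 + ∑ i, z.w s i • g i x0 := by
        intro s hs
        simp only [G, hyconst s hs]
      refine (integrableOn_congr_fun (fun s hs => (heq s hs).symm) measurableSet_Ioc).mp ?_
      have hw0i : IntegrableOn z.w0 (Ioc b z.S) :=
        ((ctrl_int hz z.S).1).mono_set (fun t ht => ⟨le_trans hb0 ht.1.le, ht.2⟩)
      have hwi : IntegrableOn z.w (Ioc b z.S) :=
        ((ctrl_int hz z.S).2).mono_set (fun t ht => ⟨le_trans hb0 ht.1.le, ht.2⟩)
      refine (hw0i.smul_const (f x0)).add ?_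
      apply integrable_finset_sum
      intro i _
      have : IntegrableOn (fun t => z.w t i) (Ioc b z.S) := by
        have : (fun t => z.w t i) = (fun v : Vec m => v i) ∘ z.w := rfl
        refine int_of_bdd (Cb := Mz) (((show Measurable (fun t => z.w t i) from (EuclideanSpace.proj i).continuous.measurable.comp hwm).aestronglyMeasurable).restrict)
          measure_Ioc_lt_top ?_
        refine ae_restrict_of_ae_restrict_of_subset
          (fun t ht => (⟨le_trans hb0 ht.1.le, ht.2⟩ : t ∈ Icc 0 z.S)) ?_
        filter_upwards [hMz] with t ht
        calc ‖z.w t i‖ = |z.w t i| := rfl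
          _ ≤ ‖z.w t‖ := abs_apply_le _ _
          _ ≤ Mz := le_trans (le_add_of_nonneg_left (abs_nonneg _)) ht
      exact this.smul_const (g i x0)
    have hSP : z.S ∈ P := by
      refine ⟨⟨hS.le, le_rfl⟩, ?_⟩
      rw [← Ioc_union_Ioc_eq_Ioc hb0 hbS]
      exact step2.union htail
    exact absurd (le_csSup hbdd hSP) (not_le.2 hblt)
  have hint : IntegrableOn (G f g z) (Icc 0 z.S) := by
    refine (step2.congr_set_ae ?_)
    rw [hbisS]
    exact (Ioc_ae_eq_Icc (α := ℝ) (a := 0) (b := z.S)).symm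
  refine ⟨hint, ?_⟩
  have hcont1 : ContinuousOn z.y (Icc 0 z.S) := by
    have hprim : ContinuousOn (fun x => x0 + ∫ t in Ioc (0:ℝ) x, G f g z t) (Icc 0 z.S) :=
      (continuousOn_const).add (intervalIntegral.continuousOn_primitive hint)
    refine ContinuousOn.congr hprim ?_
    intro s hs
    rw [hyeq s hs, intervalIntegral.integral_of_le hs.1]
  have hcont2 : ContinuousOn z.y (Ici z.S) := by
    have h : ∀ s ∈ Ici z.S, z.y s = z.y z.S := fun s hs => (hconst s hs).2.1
    exact (continuousOn_const (c := z.y z.S)).congr h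
  have hunion : Ici (0:ℝ) = Icc 0 z.S ∪ Ici z.S := (Icc_union_Ici_eq_Ici hS.le).symm
  rw [hunion]
  intro x hx
  apply ContinuousWithinAt.union
  · rcases le_or_gt x z.S with h | h
    · have hx0 : 0 ≤ x := by
        rcases hx with h' | h'
        · exact h'.1
        · exact le_trans hS.le h'
      exact hcont1 x ⟨hx0, h⟩
    · refine continuousWithinAt_of_notMem_closure ?_
      rw [isClosed_Icc.closure_eq]
      exact fun h' => absurd h'.2 (not_le.2 h)
  · rcases le_or_gt z.S x with h | h
    · exact hcont2 x h
    · refine continuousWithinAt_of_notMem_closure ?_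
      rw [isClosed_Ici.closure_eq]
      exact not_le.2 h

end Stmt14
namespace Stmt14

variable {n m : ℕ} {f : Vec n → Vec n} {g : Fin m → Vec n → Vec n}
  {C : Set (Vec m)} {x0 : Vec n}

lemma ii_of_int {E : Type*} [NormedAddCommGroup E] {h : ℝ → E} {T a b : ℝ}
    (hInt : IntegrableOn h (Icc 0 T)) (h0 : 0 ≤ a) (hab : a ≤ b) (hbT : b ≤ T) :
    IntervalIntegrable h volume a b := by
  refine IntegrableOn.intervalIntegrable ?_
  rw [uIcc_of_le hab]
  exact hInt.mono_set (Icc_subset_Icc h0 hbT)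

lemma ext_int {E : Type*} [NormedAddCommGroup E] [NormedSpace ℝ E] {h : ℝ → E} {S T : ℝ}
    (hST : S ≤ T) (h0 : 0 ≤ S) (hInt : IntegrableOn h (Icc 0 T))
    (hvanish : ∀ s, S ≤ s → h s = 0) :
    ∫ s in (0:ℝ)..T, h s = ∫ s in (0:ℝ)..S, h s := by
  have i1 : IntervalIntegrable h volume 0 S := ii_of_int hInt le_rfl h0 (le_trans hST le_rfl)
  have i2 : IntervalIntegrable h volume S T := ii_of_int hInt h0 hST le_rfl
  rw [← intervalIntegral.integral_add_adjacent_intervals i1 i2]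
  have hz : ∫ s in S..T, h s = 0 := by
    rw [intervalIntegral.integral_congr (g := fun _ => (0:E))
      (fun s hs => hvanish s (by rw [uIcc_of_le hST] at hs; exact hs.1))]
    simp
  rw [hz, add_zero]

lemma yeq' {z : RawProc n m} (hz : IsExtProcess f g C x0 z) :
    ∀ s ∈ Icc (0:ℝ) z.S, z.y s = x0 + ∫ t in (0:ℝ)..s, G f g z t := by
  intro s hs
  rw [hz.2.2.2.2.2.2.2.2.1 s hs]; rfl

lemma zero' {z : RawProc n m} (hz : IsExtProcess f g C x0 z) :
    ∀ s, z.S ≤ s → z.w0 s = 0 ∧ z.w s = 0 := fun s hs =>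
  hz.2.2.2.2.2.2.1 s (fun h => absurd h.2 (not_lt.2 hs))

end Stmt14
open Stmt14 in
/-- Convergence in the distance `d̃` implies convergence of the
endpoints, hence of any continuous cost evaluated at the endpoints. -/
theorem stmt_14 {n m : ℕ} (f : Vec n → Vec n) (g : Fin m → Vec n → Vec n)
    (C : Set (Vec m)) (x0 : Vec n)
    (hdyn : GoodDyn f g) (hCclosed : IsClosed C) (hCcone : IsConeIn C)
    (zb : RawProc n m) (hzb : IsExtProcess f g C x0 zb)
    (z : ℕ → RawProc n m) (hz : ∀ j, IsExtProcess f g C x0 (z j))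
    (hconv : Tendsto (fun j => dtil (z j) zb) atTop (nhds 0)) :
    Tendsto (fun j => (z j).y0 ((z j).S)) atTop (nhds (zb.y0 zb.S)) ∧
    Tendsto (fun j => (z j).y ((z j).S)) atTop (nhds (zb.y zb.S)) ∧
    Tendsto (fun j => (z j).β ((z j).S)) atTop (nhds (zb.β zb.S)) ∧
    ∀ Ψ : ℝ × Vec n → ℝ, Continuous Ψ →
      Tendsto (fun j => Ψ ((z j).y0 ((z j).S), (z j).y ((z j).S))) atTop
        (nhds (Ψ (zb.y0 zb.S, zb.y zb.S))) := by
  classical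
  obtain ⟨hfC, hgC, M, hfM, hgM, hfD, hgD⟩ := id hdyn
  have hM0 : 0 ≤ M := le_trans (norm_nonneg _) (hfM 0)
  set Cm : ℝ := M * (1 + m) with hCmdef
  have hCm0 : 0 ≤ Cm := by positivity
  have hSb : 0 < zb.S := hzb.1
  obtain ⟨Mb0, hMb0⟩ := hzb.2.2.2.1
  set Mb : ℝ := max Mb0 0 with hMbdef
  have hMbnn : 0 ≤ Mb := le_max_right _ _
  have hMb : ∀ᵐ s ∂volume.restrict (Icc (0:ℝ) zb.S), |zb.w0 s| + ‖zb.w s‖ ≤ Mb := by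
    rw [μres] at hMb0
    filter_upwards [hMb0] with s h using le_trans h (le_max_left _ _)
  set K' : ℝ := Cm * Mb + 1 with hK'def
  have hK'0 : (0:ℝ) < K' := by positivity
  have hCMK : Cm * Mb ≤ K' := by linarith
  set E : ℝ := Real.exp (K' * zb.S) with hEdef
  have hE0 : 0 ≤ E := (Real.exp_pos _).le
  -- the L¹ distance of the controls
  set I : ℕ → ℝ := fun j => ∫ s in (0:ℝ)..(max (z j).S zb.S),
    (|(z j).w0 s - zb.w0 s| + ‖(z j).w s - zb.w s‖) with hIdef
  have hTmx0 : ∀ j, (0:ℝ) ≤ max (z j).S zb.S := fun j => le_trans hSb.le (le_max_right _ _)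
  have hI0 : ∀ j, 0 ≤ I j := fun j =>
    intervalIntegral.integral_nonneg (hTmx0 j) (fun s _ => by positivity)
  have hIle : ∀ j, I j ≤ dtil (z j) zb := fun j =>
    le_add_of_nonneg_left (abs_nonneg _)
  have hItend : Tendsto I atTop (nhds 0) := squeeze_zero hI0 hIle hconv
  -- integrability of the control distance integrand
  have hδint : ∀ j (T : ℝ), IntegrableOn
      (fun s => |(z j).w0 s - zb.w0 s| + ‖(z j).w s - zb.w s‖) (Icc 0 T) := by
    intro j T
    exact (((ctrl_int (hz j) T).1.sub (ctrl_int hzb T).1).abs).add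
      (((ctrl_int (hz j) T).2.sub (ctrl_int hzb T).2).norm)
  have hIset : ∀ j, I j = ∫ s in Ioc (0:ℝ) (max (z j).S zb.S),
      (|(z j).w0 s - zb.w0 s| + ‖(z j).w s - zb.w s‖) := fun j =>
    intervalIntegral.integral_of_le (hTmx0 j)
  -- `y0` component
  have hy0 : ∀ j, |(z j).y0 ((z j).S) - zb.y0 zb.S| ≤ I j := by
    intro j
    set T : ℝ := max (z j).S zb.S with hTdef
    have hjT : (z j).S ≤ T := le_max_left _ _
    have hbT : zb.S ≤ T := le_max_right _ _
    have hintj := (ctrl_int (hz j) T).1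
    have hintb := (ctrl_int hzb T).1
    have e1 : (z j).y0 ((z j).S) = ∫ s in (0:ℝ)..T, (z j).w0 s := by
      rw [(hz j).2.2.2.2.2.2.2.1 ((z j).S) ⟨(hz j).1.le, le_rfl⟩]
      exact (ext_int hjT (hz j).1.le hintj (fun s hs => (zero' (hz j) s hs).1)).symm
    have e2 : zb.y0 zb.S = ∫ s in (0:ℝ)..T, zb.w0 s := by
      rw [hzb.2.2.2.2.2.2.2.1 zb.S ⟨hSb.le, le_rfl⟩]
      exact (ext_int hbT hSb.le hintb (fun s hs => (zero' hzb s hs).1)).symm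
    rw [e1, e2, ← intervalIntegral.integral_sub (ii_of_int hintj le_rfl (hTmx0 j) le_rfl)
      (ii_of_int hintb le_rfl (hTmx0 j) le_rfl)]
    refine le_trans (intervalIntegral.abs_integral_le_integral_abs (hTmx0 j)) ?_
    rw [hIset j, intervalIntegral.integral_of_le (hTmx0 j)]
    refine setIntegral_mono_on
      (IntegrableOn.mono_set ((hintj.sub hintb).abs) Ioc_subset_Icc_self)
      ((hδint j T).mono_set Ioc_subset_Icc_self) measurableSet_Ioc ?_
    exact fun s _ => le_add_of_nonneg_right (norm_nonneg _)
  -- `β` component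
  have hβ : ∀ j, |(z j).β ((z j).S) - zb.β zb.S| ≤ I j := by
    intro j
    set T : ℝ := max (z j).S zb.S with hTdef
    have hjT : (z j).S ≤ T := le_max_left _ _
    have hbT : zb.S ≤ T := le_max_right _ _
    have hintj := (ctrl_int (hz j) T).2.norm
    have hintb := (ctrl_int hzb T).2.norm
    have e1 : (z j).β ((z j).S) = ∫ s in (0:ℝ)..T, ‖(z j).w s‖ := by
      rw [(hz j).2.2.2.2.2.2.2.2.2.1 ((z j).S) ⟨(hz j).1.le, le_rfl⟩]
      refine (ext_int hjT (hz j).1.le hintj (fun s hs => ?_)).symm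
      rw [(zero' (hz j) s hs).2, norm_zero]
    have e2 : zb.β zb.S = ∫ s in (0:ℝ)..T, ‖zb.w s‖ := by
      rw [hzb.2.2.2.2.2.2.2.2.2.1 zb.S ⟨hSb.le, le_rfl⟩]
      refine (ext_int hbT hSb.le hintb (fun s hs => ?_)).symm
      rw [(zero' hzb s hs).2, norm_zero]
    rw [e1, e2, ← intervalIntegral.integral_sub (ii_of_int hintj le_rfl (hTmx0 j) le_rfl)
      (ii_of_int hintb le_rfl (hTmx0 j) le_rfl)]
    refine le_trans (intervalIntegral.abs_integral_le_integral_abs (hTmx0 j)) ?_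
    rw [hIset j, intervalIntegral.integral_of_le (hTmx0 j)]
    refine setIntegral_mono_on
      (IntegrableOn.mono_set ((hintj.sub hintb).abs) Ioc_subset_Icc_self)
      ((hδint j T).mono_set Ioc_subset_Icc_self) measurableSet_Ioc ?_
    intro s _
    exact le_trans (abs_norm_sub_norm_le _ _) (le_add_of_nonneg_left (abs_nonneg _))
  -- `y` component
  have hy : ∀ j, ‖(z j).y ((z j).S) - zb.y zb.S‖ ≤ (Cm * (2 + E)) * I j := by
    intro j
    set S1 : ℝ := (z j).S with hS1def
    have hS1 : 0 < S1 := (hz j).1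
    set Tmn : ℝ := min S1 zb.S with hTmndef
    set Tmx : ℝ := max S1 zb.S with hTmxdef
    have hTmn0 : 0 ≤ Tmn := le_min hS1.le hSb.le
    have hTmn1 : Tmn ≤ S1 := min_le_left _ _
    have hTmnb : Tmn ≤ zb.S := min_le_right _ _
    obtain ⟨hGintj, hycj⟩ := reg hdyn (hz j)
    obtain ⟨hGintb, hycb⟩ := reg hdyn hzb
    set φ : ℝ → ℝ := fun s => ‖(z j).y s - zb.y s‖ with hφdef
    have hφc : ContinuousOn φ (Ici 0) := (hycj.sub hycb).norm
    have hφ0 : ∀ s, 0 ≤ φ s := fun s => norm_nonneg _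
    set u : ℝ → ℝ := fun x => ∫ t in (0:ℝ)..x, φ t with hudef
    have hφint : ∀ x : ℝ, 0 ≤ x → IntegrableOn φ (Icc 0 x) := fun x hx =>
      (hφc.mono (Icc_subset_Ici_self)).integrableOn_Icc
    have hu0 : ∀ x, 0 ≤ x → 0 ≤ u x := fun x hx =>
      intervalIntegral.integral_nonneg hx (fun t _ => hφ0 t)
    set aj : ℝ := Cm * I j with hajdef
    have haj0 : 0 ≤ aj := mul_nonneg hCm0 (hI0 j)
    -- the central integral inequality
    have hkey : ∀ x ∈ Icc (0:ℝ) Tmn, φ x ≤ aj + (Cm * Mb) * u x := by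
      intro x hx
      have hx0 : 0 ≤ x := hx.1
      have hx1 : x ≤ S1 := le_trans hx.2 hTmn1
      have hxb : x ≤ zb.S := le_trans hx.2 hTmnb
      have iij : IntervalIntegrable (G f g (z j)) volume 0 x :=
        ii_of_int hGintj le_rfl hx0 hx1
      have iib : IntervalIntegrable (G f g zb) volume 0 x :=
        ii_of_int hGintb le_rfl hx0 hxb
      have d1 : (z j).y x - zb.y x = ∫ t in Ioc (0:ℝ) x, (G f g (z j) t - G f g zb t) := by
        rw [yeq' (hz j) x ⟨hx0, hx1⟩, yeq' hzb x ⟨hx0, hxb⟩, add_sub_add_left_eq_sub,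
          ← intervalIntegral.integral_sub iij iib, intervalIntegral.integral_of_le hx0]
      have hj' : IntegrableOn (G f g (z j)) (Ioc 0 x) :=
        hGintj.mono_set (fun t ht => ⟨ht.1.le, le_trans ht.2 hx1⟩)
      have hb' : IntegrableOn (G f g zb) (Ioc 0 x) :=
        hGintb.mono_set (fun t ht => ⟨ht.1.le, le_trans ht.2 hxb⟩)
      have hintsub : IntegrableOn (fun t => G f g (z j) t - G f g zb t) (Ioc 0 x) :=
        hj'.sub hb'
      have hφix : IntegrableOn φ (Ioc 0 x) := (hφint x hx0).mono_set Ioc_subset_Icc_self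
      have hδix : IntegrableOn
          (fun s => |(z j).w0 s - zb.w0 s| + ‖(z j).w s - zb.w s‖) (Ioc 0 x) :=
        (hδint j x).mono_set Ioc_subset_Icc_self
      have hb2 : ∫ t in Ioc (0:ℝ) x, ‖G f g (z j) t - G f g zb t‖
          ≤ ∫ t in Ioc (0:ℝ) x,
            (Cm * (|(z j).w0 t - zb.w0 t| + ‖(z j).w t - zb.w t‖) + (Cm * Mb) * φ t) := by
        refine setIntegral_mono_ae_restrict hintsub.norm
          ((hδix.const_mul Cm).add (hφix.const_mul (Cm * Mb))) ?_
        have hsub : Ioc (0:ℝ) x ⊆ Icc 0 zb.S := fun t ht => ⟨ht.1.le, le_trans ht.2 hxb⟩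
        filter_upwards [ae_restrict_of_ae_restrict_of_subset hsub hMb] with t ht
        have := Gdiff_bound hfC hgC hfM hgM hfD hgD (z j) zb t ht
        calc ‖G f g (z j) t - G f g zb t‖
            ≤ Cm * ((|(z j).w0 t - zb.w0 t| + ‖(z j).w t - zb.w t‖)
                + Mb * ‖(z j).y t - zb.y t‖) := this
          _ = Cm * (|(z j).w0 t - zb.w0 t| + ‖(z j).w t - zb.w t‖) + (Cm * Mb) * φ t := by
              ring
      have hb3 : ∫ t in Ioc (0:ℝ) x,
            (Cm * (|(z j).w0 t - zb.w0 t| + ‖(z j).w t - zb.w t‖) + (Cm * Mb) * φ t)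
          = Cm * (∫ t in Ioc (0:ℝ) x, (|(z j).w0 t - zb.w0 t| + ‖(z j).w t - zb.w t‖))
            + (Cm * Mb) * ∫ t in Ioc (0:ℝ) x, φ t := by
        rw [integral_add (hδix.const_mul Cm) (hφix.const_mul (Cm * Mb)),
          integral_const_mul, integral_const_mul]
      have hb4 : ∫ t in Ioc (0:ℝ) x, (|(z j).w0 t - zb.w0 t| + ‖(z j).w t - zb.w t‖)
          ≤ I j := by
        rw [hIset j]
        refine setIntegral_mono_set ((hδint j Tmx).mono_set Ioc_subset_Icc_self)
          (ae_of_all _ (fun s => by positivity)) ?_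
        exact HasSubset.Subset.eventuallyLE
          (Ioc_subset_Ioc le_rfl (le_trans hx1 (le_max_left _ _)))
      have hb5 : ∫ t in Ioc (0:ℝ) x, φ t = u x := (intervalIntegral.integral_of_le hx0).symm
      have hb1 : φ x ≤ ∫ t in Ioc (0:ℝ) x, ‖G f g (z j) t - G f g zb t‖ := by
        rw [hφdef]; dsimp only
        rw [d1]
        exact norm_integral_le_integral_norm _
      calc φ x ≤ ∫ t in Ioc (0:ℝ) x, ‖G f g (z j) t - G f g zb t‖ := hb1
        _ ≤ ∫ t in Ioc (0:ℝ) x,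
            (Cm * (|(z j).w0 t - zb.w0 t| + ‖(z j).w t - zb.w t‖) + (Cm * Mb) * φ t) := hb2
        _ = Cm * (∫ t in Ioc (0:ℝ) x, (|(z j).w0 t - zb.w0 t| + ‖(z j).w t - zb.w t‖))
            + (Cm * Mb) * ∫ t in Ioc (0:ℝ) x, φ t := hb3
        _ ≤ Cm * I j + (Cm * Mb) * ∫ t in Ioc (0:ℝ) x, φ t :=
            add_le_add_left (mul_le_mul_of_nonneg_left hb4 hCm0) _
        _ = aj + (Cm * Mb) * u x := by rw [hb5, hajdef]
    -- Gronwall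
    have hu' : ∀ x ∈ Ico (0:ℝ) Tmn, HasDerivWithinAt u (φ x) (Ici x) x := by
      intro x hx
      have hii : IntervalIntegrable φ volume 0 x := ii_of_int (hφint x hx.1) le_rfl hx.1 le_rfl
      have hφIci : ContinuousOn φ (Ici x) := hφc.mono (Ici_subset_Ici.2 hx.1)
      have hφIoi : ContinuousOn φ (Ioi x) := hφIci.mono Ioi_subset_Ici_self
      exact intervalIntegral.integral_hasDerivWithinAt_right (t := Ioi x) hii
        (hφIoi.stronglyMeasurableAtFilter_nhdsWithin measurableSet_Ioi x)
        ((hφIci x self_mem_Ici).mono Ioi_subset_Ici_self)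
    have hucont : ContinuousOn u (Icc 0 Tmn) := by
      have hprim : ContinuousOn (fun x => ∫ t in Ioc (0:ℝ) x, φ t) (Icc 0 Tmn) :=
        intervalIntegral.continuousOn_primitive (hφint Tmn hTmn0)
      refine hprim.congr (fun x hx => ?_)
      rw [hudef]; dsimp only
      rw [intervalIntegral.integral_of_le hx.1]
    have hbound : ∀ x ∈ Ico (0:ℝ) Tmn, ‖φ x‖ ≤ K' * ‖u x‖ + aj := by
      intro x hx
      have h := hkey x ⟨hx.1, hx.2.le⟩
      have huxnn : 0 ≤ u x := hu0 x hx.1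
      rw [Real.norm_of_nonneg (hφ0 x), Real.norm_of_nonneg huxnn]
      nlinarith [mul_le_mul_of_nonneg_right hCMK huxnn]
    have hu00 : ‖u 0‖ ≤ 0 := by
      rw [hudef]; simp
    have hgron := norm_le_gronwallBound_of_norm_deriv_right_le hucont hu' hu00 hbound
    have hum : u Tmn ≤ aj / K' * E := by
      have h := hgron Tmn ⟨hTmn0, le_rfl⟩
      rw [Real.norm_of_nonneg (hu0 Tmn hTmn0), sub_zero,
        gronwallBound_of_K_ne_0 (ne_of_gt hK'0)] at h
      have hexp : Real.exp (K' * Tmn) - 1 ≤ E := by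
        have : Real.exp (K' * Tmn) ≤ E := by
          rw [hEdef]
          exact Real.exp_le_exp.2 (mul_le_mul_of_nonneg_left hTmnb hK'0.le)
        linarith
      have hdiv : 0 ≤ aj / K' := div_nonneg haj0 hK'0.le
      calc u Tmn ≤ 0 * Real.exp (K' * Tmn) + aj / K' * (Real.exp (K' * Tmn) - 1) := h
        _ = aj / K' * (Real.exp (K' * Tmn) - 1) := by ring
        _ ≤ aj / K' * E := mul_le_mul_of_nonneg_left hexp hdiv
    have hφTmn : φ Tmn ≤ aj * (1 + E) := by
      have h := hkey Tmn ⟨hTmn0, le_rfl⟩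
      have h2 : (Cm * Mb) * u Tmn ≤ K' * (aj / K' * E) := by
        refine le_trans (mul_le_mul_of_nonneg_right hCMK (hu0 Tmn hTmn0)) ?_
        exact mul_le_mul_of_nonneg_left hum hK'0.le
      have h3 : K' * (aj / K' * E) = aj * E := by
        field_simp
      nlinarith
    -- the tail estimate
    have htail : ‖(z j).y S1 - zb.y zb.S‖ ≤ φ Tmn + Cm * I j := by
      rcases le_total S1 zb.S with hc | hc
      · have hTmneq : Tmn = S1 := min_eq_left hc
        have i1 : IntervalIntegrable (G f g zb) volume 0 S1 := ii_of_int hGintb le_rfl hS1.le hc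
        have i2 : IntervalIntegrable (G f g zb) volume S1 zb.S := ii_of_int hGintb hS1.le hc le_rfl
        have d2 : zb.y zb.S - zb.y S1 = ∫ t in Ioc S1 zb.S, G f g zb t := by
          rw [yeq' hzb zb.S ⟨hSb.le, le_rfl⟩, yeq' hzb S1 ⟨hS1.le, hc⟩, add_sub_add_left_eq_sub,
            ← intervalIntegral.integral_add_adjacent_intervals i1 i2, add_sub_cancel_left]
          exact intervalIntegral.integral_of_le hc
        have hseg : ‖zb.y zb.S - zb.y S1‖ ≤ Cm * I j := by
          rw [d2]
          calc ‖∫ t in Ioc S1 zb.S, G f g zb t‖ ≤ ∫ t in Ioc S1 zb.S, ‖G f g zb t‖ :=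
              norm_integral_le_integral_norm _
            _ ≤ ∫ t in Ioc S1 zb.S,
                Cm * (|(z j).w0 t - zb.w0 t| + ‖(z j).w t - zb.w t‖) := by
              refine setIntegral_mono_on
                (IntegrableOn.mono_set (hGintb.norm)
                  (fun t ht => ⟨le_trans hS1.le ht.1.le, ht.2⟩))
                (IntegrableOn.mono_set ((hδint j zb.S).const_mul Cm)
                  (fun t ht => ⟨le_trans hS1.le ht.1.le, ht.2⟩)) measurableSet_Ioc ?_
              intro t ht
              have hz0 := zero' (hz j) t ht.1.le
              rw [hz0.1, hz0.2, zero_sub, zero_sub, abs_neg, norm_neg]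
              exact G_bound hfM hgM zb t
            _ ≤ Cm * I j := by
              rw [hIset j, integral_const_mul]
              refine mul_le_mul_of_nonneg_left ?_ hCm0
              refine setIntegral_mono_set
                (IntegrableOn.mono_set (hδint j Tmx) Ioc_subset_Icc_self)
                (ae_of_all _ fun s => by positivity)
                (HasSubset.Subset.eventuallyLE
                  (Ioc_subset_Ioc hS1.le (le_max_right _ _)))
        have tri : ‖(z j).y S1 - zb.y zb.S‖
            ≤ ‖(z j).y S1 - zb.y S1‖ + ‖zb.y S1 - zb.y zb.S‖ := by
          have := dist_triangle ((z j).y S1) (zb.y S1) (zb.y zb.S)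
          simpa [dist_eq_norm] using this
        rw [hTmneq]
        calc ‖(z j).y S1 - zb.y zb.S‖
            ≤ ‖(z j).y S1 - zb.y S1‖ + ‖zb.y S1 - zb.y zb.S‖ := tri
          _ ≤ φ S1 + Cm * I j := by
              rw [norm_sub_rev (zb.y S1)]
              exact add_le_add_right hseg _
      · have hTmneq : Tmn = zb.S := min_eq_right hc
        have i1 : IntervalIntegrable (G f g (z j)) volume 0 zb.S :=
          ii_of_int hGintj le_rfl hSb.le hc
        have i2 : IntervalIntegrable (G f g (z j)) volume zb.S S1 :=
          ii_of_int hGintj hSb.le hc le_rfl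
        have d2 : (z j).y S1 - (z j).y zb.S = ∫ t in Ioc zb.S S1, G f g (z j) t := by
          rw [yeq' (hz j) S1 ⟨hS1.le, le_rfl⟩, yeq' (hz j) zb.S ⟨hSb.le, hc⟩,
            add_sub_add_left_eq_sub,
            ← intervalIntegral.integral_add_adjacent_intervals i1 i2, add_sub_cancel_left]
          exact intervalIntegral.integral_of_le hc
        have hseg : ‖(z j).y S1 - (z j).y zb.S‖ ≤ Cm * I j := by
          rw [d2]
          calc ‖∫ t in Ioc zb.S S1, G f g (z j) t‖ ≤ ∫ t in Ioc zb.S S1, ‖G f g (z j) t‖ :=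
              norm_integral_le_integral_norm _
            _ ≤ ∫ t in Ioc zb.S S1,
                Cm * (|(z j).w0 t - zb.w0 t| + ‖(z j).w t - zb.w t‖) := by
              refine setIntegral_mono_on
                (IntegrableOn.mono_set (hGintj.norm)
                  (fun t ht => ⟨le_trans hSb.le ht.1.le, ht.2⟩))
                (IntegrableOn.mono_set ((hδint j S1).const_mul Cm)
                  (fun t ht => ⟨le_trans hSb.le ht.1.le, ht.2⟩)) measurableSet_Ioc ?_
              intro t ht
              have hz0 := zero' hzb t ht.1.le
              rw [hz0.1, hz0.2, sub_zero, sub_zero]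
              exact G_bound hfM hgM (z j) t
            _ ≤ Cm * I j := by
              rw [hIset j, integral_const_mul]
              refine mul_le_mul_of_nonneg_left ?_ hCm0
              refine setIntegral_mono_set
                (IntegrableOn.mono_set (hδint j Tmx) Ioc_subset_Icc_self)
                (ae_of_all _ fun s => by positivity)
                (HasSubset.Subset.eventuallyLE
                  (Ioc_subset_Ioc hSb.le (le_max_left _ _)))
        have tri : ‖(z j).y S1 - zb.y zb.S‖
            ≤ ‖(z j).y S1 - (z j).y zb.S‖ + ‖(z j).y zb.S - zb.y zb.S‖ := by
          have := dist_triangle ((z j).y S1) ((z j).y zb.S) (zb.y zb.S)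
          simpa [dist_eq_norm] using this
        rw [hTmneq]
        calc ‖(z j).y S1 - zb.y zb.S‖
            ≤ ‖(z j).y S1 - (z j).y zb.S‖ + ‖(z j).y zb.S - zb.y zb.S‖ := tri
          _ ≤ Cm * I j + φ zb.S := add_le_add_left hseg _
          _ = φ zb.S + Cm * I j := by ring
    calc ‖(z j).y ((z j).S) - zb.y zb.S‖ = ‖(z j).y S1 - zb.y zb.S‖ := rfl
      _ ≤ φ Tmn + Cm * I j := htail
      _ ≤ aj * (1 + E) + Cm * I j := by linarith
      _ = (Cm * (2 + E)) * I j := by rw [hajdef]; ring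
  -- assemble
  have t1 : Tendsto (fun j => (z j).y0 ((z j).S)) atTop (nhds (zb.y0 zb.S)) := by
    rw [tendsto_iff_dist_tendsto_zero]
    refine squeeze_zero (fun j => dist_nonneg) (fun j => ?_) hItend
    rw [Real.dist_eq]; exact hy0 j
  have t2 : Tendsto (fun j => (z j).y ((z j).S)) atTop (nhds (zb.y zb.S)) := by
    rw [tendsto_iff_dist_tendsto_zero]
    have : Tendsto (fun j => (Cm * (2 + E)) * I j) atTop (nhds 0) := by
      simpa using hItend.const_mul (Cm * (2 + E))
    refine squeeze_zero (fun j => dist_nonneg) (fun j => ?_) this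
    rw [dist_eq_norm]; exact hy j
  have t3 : Tendsto (fun j => (z j).β ((z j).S)) atTop (nhds (zb.β zb.S)) := by
    rw [tendsto_iff_dist_tendsto_zero]
    refine squeeze_zero (fun j => dist_nonneg) (fun j => ?_) hItend
    rw [Real.dist_eq]; exact hβ j
  refine ⟨t1, t2, t3, fun Ψ hΨ => ?_⟩
  have : Tendsto (fun j => ((z j).y0 ((z j).S), (z j).y ((z j).S))) atTop
      (nhds (zb.y0 zb.S, zb.y zb.S)) := t1.prodMk_nhds t2
  exact (hΨ.tendsto _).comp this
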